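/- Let (X,𝔅) be a measurable space and r : X → X measurable, onto and finite-to-one. Let D : X → [0,∞) be a measurable function with Σ_{y : r(y)=x} D(y) = 1 for all x ∈ X, and set D^{(n)} := D·(D∘r)⋯(D∘r^{n-1}) for n ∈ ℕ, D^{(0)} := 1. Then for each x₀ ∈ X there exists a Borel probability measure P_{x₀} on the fiber path space Ω_{x₀} := {(x₁,x₂,…) ∈ X^ℕ : r(x₁) = x₀ and r(x_{n+1}) = x_n for all n ≥ 1} such that for every n and every bounded measurable function f on Ω_{x₀} depending only on the first n coordinates x₁,…,x_n, one has ∫_{Ω_{x₀}} f dP_{x₀} = Σ_{x_n : rⁿ(x_n) = x₀} D^{(n)}(x_n) · f(x₁,…,x_n), where x_k = r^{n-k}(x_n) for 1 ≤ k ≤ n. -/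

import Mathlib

open MeasureTheory
open scoped ENNReal

/-- The fiber path space `Ω_{x₀}`: infinite backward orbits starting at `x₀`. -/
def Omega {X : Type} (r : X → X) (x₀ : X) : Set (ℕ → X) :=
  {ω | r (ω 0) = x₀ ∧ ∀ n, r (ω (n + 1)) = ω n}

/-!
Well-order `X` and subdivide `[0, 1)` into a tree of half-open cells: the cell of a point `y`
with `r^[n] y = x₀` has length `D⁽ⁿ⁾(y)`, and the cells of the `r`-preimages of `y` are stacked
side by side inside it, which fits exactly because `∑_{r z = y} D⁽ⁿ⁺¹⁾(z) = D⁽ⁿ⁾(y)`.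
Each `t ∈ [0, 1)` lies in exactly one cell of every level, and these cells form a backward
orbit of `x₀`. The image of Lebesgue measure under `t ↦` this orbit is `P_{x₀}`: its `n`-th
coordinate equals `y` on a set of measure `D⁽ⁿ⁺¹⁾(y)`.
-/

open Set

section Stacking

variable {α : Type*} [LinearOrder α] (s : Finset α) (w : α → ℝ)

noncomputable def stackOffset (y : α) : ℝ := ∑ z ∈ s with z < y, w z

def stackCell (y : α) : Set ℝ := Ico (stackOffset s w y) (stackOffset s w y + w y)

variable {s w}

lemma stackOffset_nonneg (hw : ∀ z ∈ s, 0 ≤ w z) (y : α) : 0 ≤ stackOffset s w y :=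
  Finset.sum_nonneg fun z hz => hw z (Finset.mem_filter.1 hz).1

lemma stackOffset_add_le_sum_of_subset (hw : ∀ z ∈ s, 0 ≤ w z) {y : α} {u : Finset α}
    (hu : insert y {z ∈ s | z < y} ⊆ u) (hus : u ⊆ s) :
    stackOffset s w y + w y ≤ ∑ z ∈ u, w z := by
  calc stackOffset s w y + w y = ∑ z ∈ insert y {z ∈ s | z < y}, w z := by
        rw [Finset.sum_insert (by simp), stackOffset, add_comm]
    _ ≤ ∑ z ∈ u, w z := Finset.sum_le_sum_of_subset_of_nonneg hu fun z hz _ => hw z (hus hz)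

lemma stackOffset_add_le_sum (hw : ∀ z ∈ s, 0 ≤ w z) {y : α} (hy : y ∈ s) :
    stackOffset s w y + w y ≤ ∑ z ∈ s, w z :=
  stackOffset_add_le_sum_of_subset hw (Finset.insert_subset hy (Finset.filter_subset _ _))
    subset_rfl

lemma stackOffset_add_le_of_lt (hw : ∀ z ∈ s, 0 ≤ w z) {y y' : α} (hy : y ∈ s) (h : y < y') :
    stackOffset s w y + w y ≤ stackOffset s w y' := by
  refine stackOffset_add_le_sum_of_subset hw ?_ (Finset.filter_subset _ _)
  refine Finset.insert_subset (Finset.mem_filter.2 ⟨hy, h⟩) fun z hz => ?_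
  simp only [Finset.mem_filter] at hz ⊢
  exact ⟨hz.1, hz.2.trans h⟩

lemma eq_of_mem_stackCell (hw : ∀ z ∈ s, 0 ≤ w z) {y y' : α} (hy : y ∈ s) (hy' : y' ∈ s)
    {t : ℝ} (ht : t ∈ stackCell s w y) (ht' : t ∈ stackCell s w y') : y = y' := by
  by_contra hne
  rcases lt_or_gt_of_ne hne with h | h
  · linarith [stackOffset_add_le_of_lt hw hy h, ht.2, ht'.1]
  · linarith [stackOffset_add_le_of_lt hw hy' h, ht.1, ht'.2]

lemma exists_mem_stackCell (hw : ∀ z ∈ s, 0 ≤ w z) {t : ℝ} (h0 : 0 ≤ t)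
    (ht : t < ∑ z ∈ s, w z) : ∃ y ∈ s, t ∈ stackCell s w y := by
  induction s using Finset.induction_on_max with
  | empty => simp at ht; linarith
  | insert a s hlt ih =>
    have ha : a ∉ s := fun h => lt_irrefl a (hlt a h)
    rw [Finset.sum_insert ha] at ht
    by_cases hts : t < ∑ z ∈ s, w z
    · obtain ⟨y, hy, hty⟩ := ih (fun z hz => hw z (Finset.mem_insert_of_mem hz)) hts
      have hoff : stackOffset (insert a s) w y = stackOffset s w y := by
        rw [stackOffset, Finset.filter_insert, if_neg (hlt y hy).not_gt, stackOffset]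
      exact ⟨y, Finset.mem_insert_of_mem hy, by rwa [stackCell, hoff]⟩
    · have hoff : stackOffset (insert a s) w a = ∑ z ∈ s, w z := by
        rw [stackOffset, Finset.filter_insert, if_neg (lt_irrefl a),
          Finset.filter_true_of_mem hlt]
      exact ⟨a, Finset.mem_insert_self a s, by
        rw [stackCell, hoff]; exact ⟨not_lt.1 hts, by linarith⟩⟩

end Stacking

lemma Set.Finite.tsum_subtype_eq_sum {β M : Type*} [AddCommMonoid M] [TopologicalSpace M]
    {s : Set β} (hs : s.Finite) (f : β → M) :
    ∑' x : s, f x = ∑ x ∈ hs.toFinset, f x := by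
  rw [← Finset.tsum_subtype', hs.coe_toFinset]

lemma finite_preimage_iterate_singleton {X : Type*} {f : X → X} (hf : ∀ x, (f ⁻¹' {x}).Finite)
    (n : ℕ) (x : X) : ((f^[n]) ⁻¹' {x}).Finite := by
  induction n generalizing x with
  | zero => simp
  | succ n ih =>
    rw [Function.iterate_succ, Set.preimage_comp]
    exact (ih x).preimage' fun z _ => hf z

section PathWeight

variable {X : Type*} (r : X → X) (D : X → ℝ) (hfin : ∀ x, (r ⁻¹' {x}).Finite)

noncomputable def children (z : X) : Finset X := (hfin z).toFinset

def pathWeight (n : ℕ) (y : X) : ℝ := ∏ k ∈ Finset.range n, D (r^[k] y)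

variable {r D hfin}

@[simp]
lemma mem_children {y z : X} : y ∈ children r hfin z ↔ r y = z := by
  simp [children]

lemma pathWeight_succ (n : ℕ) (y : X) :
    pathWeight r D (n + 1) y = D y * pathWeight r D n (r y) := by
  simp only [pathWeight, Finset.prod_range_succ', Function.iterate_succ_apply,
    Function.iterate_zero_apply, mul_comm]

lemma pathWeight_nonneg (hDpos : ∀ x, 0 ≤ D x) (n : ℕ) (y : X) : 0 ≤ pathWeight r D n y :=
  Finset.prod_nonneg fun _ _ => hDpos _

lemma sum_children_pathWeight (hDsum : ∀ x, (∑' y : r ⁻¹' {x}, D y) = 1) (n : ℕ) (z : X) :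
    ∑ y ∈ children r hfin z, pathWeight r D (n + 1) y = pathWeight r D n z := by
  have hD : ∑ y ∈ children r hfin z, D y = 1 := by
    rw [← hDsum z, (hfin z).tsum_subtype_eq_sum, children]
  rw [Finset.sum_congr rfl fun y hy => by rw [pathWeight_succ, mem_children.1 hy],
    ← Finset.sum_mul, hD, one_mul]

end PathWeight

section CellTree

variable {X : Type*} [LinearOrder X] (r : X → X) (D : X → ℝ) (hfin : ∀ x, (r ⁻¹' {x}).Finite)

noncomputable def cellLeft : ℕ → X → ℝ
  | 0, _ => 0
  | n + 1, y => cellLeft n (r y) + stackOffset (children r hfin (r y)) (pathWeight r D (n + 1)) y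

def cell (n : ℕ) (y : X) : Set ℝ :=
  Ico (cellLeft r D hfin n y) (cellLeft r D hfin n y + pathWeight r D n y)

variable {r D hfin}

lemma mem_cell_succ_iff {n : ℕ} {y : X} {t : ℝ} :
    t ∈ cell r D hfin (n + 1) y ↔ t - cellLeft r D hfin n (r y) ∈
      stackCell (children r hfin (r y)) (pathWeight r D (n + 1)) y := by
  simp only [cell, stackCell, cellLeft, Set.mem_Ico]
  constructor <;> rintro ⟨h1, h2⟩ <;> constructor <;> linarith

lemma cell_succ_subset (hDpos : ∀ x, 0 ≤ D x) (hDsum : ∀ x, (∑' y : r ⁻¹' {x}, D y) = 1)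
    (n : ℕ) (y : X) : cell r D hfin (n + 1) y ⊆ cell r D hfin n (r y) := by
  have hw : ∀ z ∈ children r hfin (r y), 0 ≤ pathWeight r D (n + 1) z :=
    fun z _ => pathWeight_nonneg hDpos _ z
  have h0 := stackOffset_nonneg hw y
  have h1 := stackOffset_add_le_sum hw (mem_children.2 rfl)
  rw [sum_children_pathWeight hDsum] at h1
  exact Set.Ico_subset_Ico (by simp only [cellLeft]; linarith) (by simp only [cellLeft]; linarith)

lemma cell_subset_Ico (hDpos : ∀ x, 0 ≤ D x) (hDsum : ∀ x, (∑' y : r ⁻¹' {x}, D y) = 1) :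
    ∀ (n : ℕ) (y : X), cell r D hfin n y ⊆ Ico 0 1
  | 0, y => by simp [cell, cellLeft, pathWeight]
  | n + 1, y => (cell_succ_subset hDpos hDsum n y).trans (cell_subset_Ico hDpos hDsum n (r y))

lemma eq_of_mem_cell (hDpos : ∀ x, 0 ≤ D x) (hDsum : ∀ x, (∑' y : r ⁻¹' {x}, D y) = 1)
    {n : ℕ} {y y' : X} (hyy' : r^[n] y = r^[n] y') {t : ℝ} (ht : t ∈ cell r D hfin n y)
    (ht' : t ∈ cell r D hfin n y') : y = y' := by
  induction n generalizing y y' with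
  | zero => exact hyy'
  | succ n ih =>
    have hr : r y = r y' := ih hyy' (cell_succ_subset hDpos hDsum n y ht)
      (cell_succ_subset hDpos hDsum n y' ht')
    rw [mem_cell_succ_iff] at ht ht'
    rw [← hr] at ht'
    exact eq_of_mem_stackCell (fun z _ => pathWeight_nonneg hDpos _ z) (mem_children.2 rfl)
      (mem_children.2 hr.symm) ht ht'

lemma exists_mem_cell (hDpos : ∀ x, 0 ≤ D x) (hDsum : ∀ x, (∑' y : r ⁻¹' {x}, D y) = 1)
    (x₀ : X) {t : ℝ} (ht : t ∈ Ico (0 : ℝ) 1) (n : ℕ) :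
    ∃ y, r^[n] y = x₀ ∧ t ∈ cell r D hfin n y := by
  induction n with
  | zero => exact ⟨x₀, rfl, by simpa [cell, cellLeft, pathWeight] using ht⟩
  | succ n ih =>
    obtain ⟨z, hz, htz⟩ := ih
    have hlt : t - cellLeft r D hfin n z < ∑ y ∈ children r hfin z, pathWeight r D (n + 1) y := by
      rw [sum_children_pathWeight hDsum]
      linarith [htz.2]
    obtain ⟨y, hy, hty⟩ :=
      exists_mem_stackCell (fun z _ => pathWeight_nonneg hDpos _ z) (sub_nonneg.2 htz.1) hlt
    obtain rfl := mem_children.1 hy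
    exact ⟨y, by rwa [Function.iterate_succ_apply], mem_cell_succ_iff.2 hty⟩

end CellTree

section CellPoint

variable {X : Type} [LinearOrder X] {r : X → X} {D : X → ℝ} {hfin : ∀ x, (r ⁻¹' {x}).Finite}

variable (r D hfin) in
noncomputable def cellPoint (x₀ : X) (n : ℕ) (t : ℝ) : X :=
  @Classical.epsilon X ⟨x₀⟩ fun y => r^[n] y = x₀ ∧ t ∈ cell r D hfin n y

variable {x₀ : X} {t : ℝ}

lemma cellPoint_spec (hDpos : ∀ x, 0 ≤ D x) (hDsum : ∀ x, (∑' y : r ⁻¹' {x}, D y) = 1)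
    (ht : t ∈ Ico (0 : ℝ) 1) (n : ℕ) :
    r^[n] (cellPoint r D hfin x₀ n t) = x₀ ∧ t ∈ cell r D hfin n (cellPoint r D hfin x₀ n t) :=
  @Classical.epsilon_spec X _ (exists_mem_cell hDpos hDsum x₀ ht n)

lemma cellPoint_eq_iff (hDpos : ∀ x, 0 ≤ D x) (hDsum : ∀ x, (∑' y : r ⁻¹' {x}, D y) = 1)
    (ht : t ∈ Ico (0 : ℝ) 1) {n : ℕ} {y : X} (hy : r^[n] y = x₀) :
    cellPoint r D hfin x₀ n t = y ↔ t ∈ cell r D hfin n y := by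
  obtain ⟨hx, htx⟩ := cellPoint_spec hDpos hDsum ht n
  exact ⟨fun h => h ▸ htx, eq_of_mem_cell hDpos hDsum (hx.trans hy.symm) htx⟩

lemma apply_cellPoint_succ (hDpos : ∀ x, 0 ≤ D x) (hDsum : ∀ x, (∑' y : r ⁻¹' {x}, D y) = 1)
    (ht : t ∈ Ico (0 : ℝ) 1) (n : ℕ) :
    r (cellPoint r D hfin x₀ (n + 1) t) = cellPoint r D hfin x₀ n t := by
  obtain ⟨hx, htx⟩ := cellPoint_spec hDpos hDsum ht (n + 1)
  rw [Function.iterate_succ_apply] at hx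
  exact ((cellPoint_eq_iff hDpos hDsum ht hx).2 (cell_succ_subset hDpos hDsum n _ htx)).symm

lemma cellPoint_succ_mem_Omega (hDpos : ∀ x, 0 ≤ D x)
    (hDsum : ∀ x, (∑' y : r ⁻¹' {x}, D y) = 1) (ht : t ∈ Ico (0 : ℝ) 1) :
    (fun n => cellPoint r D hfin x₀ (n + 1) t) ∈ Omega r x₀ :=
  ⟨(apply_cellPoint_succ hDpos hDsum ht 0).trans (cellPoint_spec hDpos hDsum ht 0).1,
    fun n => apply_cellPoint_succ hDpos hDsum ht (n + 1)⟩

lemma measurable_cellPoint_fract [MeasurableSpace X] (hDpos : ∀ x, 0 ≤ D x)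
    (hDsum : ∀ x, (∑' y : r ⁻¹' {x}, D y) = 1) (n : ℕ) :
    Measurable fun t => cellPoint r D hfin x₀ n (Int.fract t) := by
  intro S _
  have hpre : (fun t => cellPoint r D hfin x₀ n (Int.fract t)) ⁻¹' S =
      ⋃ y ∈ (r^[n]) ⁻¹' {x₀} ∩ S, Int.fract ⁻¹' cell r D hfin n y := by
    ext t
    have ht : Int.fract t ∈ Ico (0 : ℝ) 1 := ⟨Int.fract_nonneg t, Int.fract_lt_one t⟩
    simp only [Set.mem_preimage, Set.mem_iUnion, Set.mem_inter_iff, Set.mem_singleton_iff,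
      exists_prop]
    constructor
    · intro hS
      exact ⟨_, ⟨(cellPoint_spec hDpos hDsum ht n).1, hS⟩, (cellPoint_spec hDpos hDsum ht n).2⟩
    · rintro ⟨y, ⟨hy, hyS⟩, hty⟩
      rwa [(cellPoint_eq_iff hDpos hDsum ht hy).2 hty]
  rw [hpre]
  exact .biUnion ((finite_preimage_iterate_singleton hfin n x₀).inter_of_left S).countable
    fun y _ => measurable_fract measurableSet_Ico

end CellPoint

instance isProbabilityMeasure_restrict_Ico_zero_one :
    IsProbabilityMeasure (volume.restrict (Ico (0 : ℝ) 1)) :=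
  ⟨by simp⟩

section FiberMeasure

variable {X : Type} [LinearOrder X] {r : X → X} {D : X → ℝ} {hfin : ∀ x, (r ⁻¹' {x}).Finite}
  {x₀ : X}

lemma setIntegral_comp_cellPoint (hDpos : ∀ x, 0 ≤ D x)
    (hDsum : ∀ x, (∑' y : r ⁻¹' {x}, D y) = 1) (n : ℕ) (F : X → ℝ) :
    ∫ t in Ico (0 : ℝ) 1, F (cellPoint r D hfin x₀ n t) =
      ∑ y ∈ (finite_preimage_iterate_singleton hfin n x₀).toFinset, pathWeight r D n y * F y := by
  set L := (finite_preimage_iterate_singleton hfin n x₀).toFinset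
  have hL {y : X} : y ∈ L ↔ r^[n] y = x₀ := by simp [L]
  have hstep : ∀ t ∈ Ico (0 : ℝ) 1, F (cellPoint r D hfin x₀ n t) =
      ∑ y ∈ L, (cell r D hfin n y).indicator (fun _ => F y) t := by
    intro t ht
    obtain ⟨hx, htx⟩ := cellPoint_spec hDpos hDsum ht n
    rw [Finset.sum_eq_single_of_mem _ (hL.2 hx), Set.indicator_of_mem htx]
    intro y hy hne
    exact Set.indicator_of_notMem
      (fun hty => hne ((cellPoint_eq_iff hDpos hDsum ht (hL.1 hy)).2 hty).symm) _
  have hcell (y : X) : MeasurableSet (cell r D hfin n y) := measurableSet_Ico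
  rw [setIntegral_congr_fun measurableSet_Ico hstep, integral_finsetSum]
  · refine Finset.sum_congr rfl fun y _ => ?_
    rw [integral_indicator_const _ (hcell y), measureReal_restrict_apply (hcell y),
      Set.inter_eq_self_of_subset_left (cell_subset_Ico hDpos hDsum n y), cell,
      Real.volume_real_Ico_of_le (by linarith [pathWeight_nonneg (r := r) hDpos n y]),
      add_sub_cancel_left, smul_eq_mul]
  · exact fun y _ => (integrable_const (F y)).indicator (hcell y)

variable (r D hfin) in
/-- `Int.fract` merely extends the path map from `[0, 1)`, where it is the identity, to `ℝ`. -/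
noncomputable def fiberPath (hDpos : ∀ x, 0 ≤ D x) (hDsum : ∀ x, (∑' y : r ⁻¹' {x}, D y) = 1)
    (x₀ : X) (t : ℝ) : Omega r x₀ :=
  ⟨fun n => cellPoint r D hfin x₀ (n + 1) (Int.fract t),
    cellPoint_succ_mem_Omega hDpos hDsum ⟨Int.fract_nonneg t, Int.fract_lt_one t⟩⟩

variable [MeasurableSpace X]

variable (r D hfin) in
noncomputable def fiberMeasure (hDpos : ∀ x, 0 ≤ D x)
    (hDsum : ∀ x, (∑' y : r ⁻¹' {x}, D y) = 1) (x₀ : X) : Measure (Omega r x₀) :=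
  (volume.restrict (Ico (0 : ℝ) 1)).map (fiberPath r D hfin hDpos hDsum x₀)

lemma measurable_fiberPath (hDpos : ∀ x, 0 ≤ D x)
    (hDsum : ∀ x, (∑' y : r ⁻¹' {x}, D y) = 1) :
    Measurable (fiberPath r D hfin hDpos hDsum x₀) :=
  .subtype_mk <| measurable_pi_lambda _ fun n => measurable_cellPoint_fract hDpos hDsum (n + 1)

instance isProbabilityMeasure_fiberMeasure (hDpos : ∀ x, 0 ≤ D x)
    (hDsum : ∀ x, (∑' y : r ⁻¹' {x}, D y) = 1) :
    IsProbabilityMeasure (fiberMeasure r D hfin hDpos hDsum x₀) :=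
  Measure.isProbabilityMeasure_map (measurable_fiberPath hDpos hDsum).aemeasurable

lemma integral_fiberMeasure (hDpos : ∀ x, 0 ≤ D x)
    (hDsum : ∀ x, (∑' y : r ⁻¹' {x}, D y) = 1) (n : ℕ) {F : X → ℝ} (hF : Measurable F) :
    ∫ ω, F ((ω : ℕ → X) n) ∂fiberMeasure r D hfin hDpos hDsum x₀ =
      ∑ y ∈ (finite_preimage_iterate_singleton hfin (n + 1) x₀).toFinset,
        pathWeight r D (n + 1) y * F y := by
  have hFn : Measurable fun ω : Omega r x₀ => F ((ω : ℕ → X) n) :=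
    hF.comp ((measurable_pi_apply n).comp measurable_subtype_coe)
  rw [fiberMeasure, integral_map (measurable_fiberPath hDpos hDsum).aemeasurable
    hFn.aestronglyMeasurable,
    ← setIntegral_comp_cellPoint (hfin := hfin) hDpos hDsum]
  exact setIntegral_congr_fun measurableSet_Ico fun t ht => by
    simp only [fiberPath, Int.fract_eq_self.2 ht]

end FiberMeasure

theorem exists_markov_fiber_measure_general
    (X : Type) [MeasurableSpace X] (r : X → X)
    (hfin : ∀ x, (r ⁻¹' {x}).Finite)
    (D : X → ℝ) (hDpos : ∀ x, 0 ≤ D x)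
    (hDsum : ∀ x, (∑' y : r ⁻¹' {x}, D y) = 1) :
    ∀ x₀ : X, ∃ P : Measure (Omega r x₀), IsProbabilityMeasure P ∧
      ∀ (n : ℕ) (F : X → ℝ), Measurable F → (∃ C, ∀ x, |F x| ≤ C) →
        ∫ ω, F ((ω : ℕ → X) n) ∂P =
          ∑' y : (r^[n + 1]) ⁻¹' {x₀},
            (∏ k ∈ Finset.range (n + 1), D (r^[k] y)) * F y := by
  intro x₀
  let : LinearOrder X := IsWellOrder.linearOrder WellOrderingRel
  refine ⟨fiberMeasure r D hfin hDpos hDsum x₀, inferInstance, fun n F hF _ => ?_⟩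
  rw [integral_fiberMeasure hDpos hDsum n hF]
  exact ((finite_preimage_iterate_singleton hfin (n + 1) x₀).tsum_subtype_eq_sum _).symm

/-- Proposition 5.20: if `D ≥ 0` satisfies `Σ_{r(y)=x} D(y) = 1` for all `x`, then for each
`x₀` there is a Borel probability measure `P_{x₀}` on `Ω_{x₀}` such that for every bounded
measurable function depending only on the first `n` coordinates (equivalently, of the form
`ω ↦ F(ω_{n-1})`, since the first `n` coordinates are determined by the `n`-th one),
`∫ f dP_{x₀} = Σ_{rⁿ(x_n)=x₀} D^{(n)}(x_n) f(x₁,…,x_n)`. -/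
theorem exists_markov_fiber_measure
    (X : Type) [MeasurableSpace X] (r : X → X) (hr : Measurable r)
    (hsur : Function.Surjective r) (hfin : ∀ x, (r ⁻¹' {x}).Finite)
    (D : X → ℝ) (hD : Measurable D) (hDpos : ∀ x, 0 ≤ D x)
    (hDsum : ∀ x, (∑' y : r ⁻¹' {x}, D y) = 1) :
    ∀ x₀ : X, ∃ P : Measure (Omega r x₀), IsProbabilityMeasure P ∧
      ∀ (n : ℕ) (F : X → ℝ), Measurable F → (∃ C, ∀ x, |F x| ≤ C) →
        ∫ ω, F ((ω : ℕ → X) n) ∂P =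
          ∑' y : (r^[n + 1]) ⁻¹' {x₀},
            (∏ k ∈ Finset.range (n + 1), D (r^[k] y)) * F y :=
  exists_markov_fiber_measure_general X r hfin D hDpos hDsum
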